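/- If a, a₁, b, b₁ ∈ IS_n satisfy a ∼ a₁ and b ∼ b₁, then a * b = a₁ * b₁ (equality, not merely equivalence, of the sandwich products). -/

import Mathlib

open Equiv

/-- `IS n` : the symmetric inverse semigroup on `{1,…,n}`, modeled as partial
equivalences of `Fin n`.  Composition is left-to-right: `(x.trans y) t = y (x t)`. -/
abbrev IS (n : ℕ) := PEquiv (Fin n) (Fin n)

/-- The domain of a partial injective transformation. -/
def sdom {n : ℕ} (x : IS n) : Set (Fin n) := {a | (x a).isSome}

/-- The image of a partial injective transformation. -/
def sim {n : ℕ} (x : IS n) : Set (Fin n) := {b | (x.symm b).isSome}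

/-- The rank of a partial injective transformation: the cardinality of its image. -/
noncomputable def srank {n : ℕ} (x : IS n) : ℕ := Nat.card (sim x)

/-- The set `A = {1,…,k}` inside `Fin n`, i.e. the first `k` elements. -/
def SetA (n k : ℕ) : Set (Fin n) := {i | (i : ℕ) < k}

/-- The idempotent `e` acting identically on `A`, with `dom e = im e = A`. -/
def sandE (n k : ℕ) : IS n where
  toFun i := if (i : ℕ) < k then some i else none
  invFun i := if (i : ℕ) < k then some i else none
  inv a b := by
    try dsimp only
    split_ifs with h1 h2 <;>
      simp_all [Option.mem_def, eq_comm] <;> rintro rfl <;> omega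

/-- The sandwich multiplication `x * y = x e y` (left-to-right composition). -/
def smul (n k : ℕ) (x y : IS n) : IS n := (x.trans (sandE n k)).trans y

/-- `a` is decomposable in `(IS_n, *)` if `a = b * c` for some `b, c`. -/
def Decomp (n k : ℕ) (a : IS n) : Prop := ∃ b c : IS n, smul n k b c = a

/-- `M₁(a) = {x ∈ dom a : x ∈ A, a x ∈ A}`. -/
def M1 (n k : ℕ) (a : IS n) : Set (Fin n) :=
  {x | x ∈ SetA n k ∧ ∃ y ∈ SetA n k, a x = some y}

/-- `M₂(a) = {x ∈ dom a : x ∈ A, a x ∈ Ā}`. -/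
def M2 (n k : ℕ) (a : IS n) : Set (Fin n) :=
  {x | x ∈ SetA n k ∧ ∃ y, y ∉ SetA n k ∧ a x = some y}

/-- `M₃(a) = {x ∈ dom a : x ∈ Ā, a x ∈ A}`. -/
def M3 (n k : ℕ) (a : IS n) : Set (Fin n) :=
  {x | x ∉ SetA n k ∧ ∃ y ∈ SetA n k, a x = some y}

/-- The relation `∼` : for indecomposable `a, b`, `a ∼ b` iff `Mᵢ(a) = Mᵢ(b)` for
`i = 1,2,3` and `a x = b x` on `M₁(a) ∪ M₂(a) ∪ M₃(a)`; if `a` or `b` is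
decomposable, `a ∼ b` iff `a = b`. -/
def SimRel (n k : ℕ) (a b : IS n) : Prop :=
  (¬ Decomp n k a ∧ ¬ Decomp n k b ∧ M1 n k a = M1 n k b ∧ M2 n k a = M2 n k b ∧
    M3 n k a = M3 n k b ∧ ∀ x ∈ M1 n k a ∪ M2 n k a ∪ M3 n k a, a x = b x)
  ∨ ((Decomp n k a ∨ Decomp n k b) ∧ a = b)

/-!
`a * b = (a e)(e b)` because `e` is idempotent. The factor `a e` only sees the
arrows of `a` that end in `A`, i.e. `a` restricted to `M₁(a) ∪ M₃(a)`, and the factor `e b`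
only sees `b` restricted to `A`, i.e. to `M₁(b) ∪ M₂(b)`. These restrictions are exactly the
data preserved by `∼`.
-/

section Sandwich

variable {n k : ℕ}

theorem sandE_eq_some_iff {i j : Fin n} : sandE n k i = some j ↔ j = i ∧ j ∈ SetA n k := by
  change (if (i : ℕ) < k then some i else none) = some j ↔ j = i ∧ (j : ℕ) < k
  split_ifs with hi <;> grind

theorem sandE_apply_of_notMem {i : Fin n} (hi : i ∉ SetA n k) : sandE n k i = none :=
  if_neg hi

theorem trans_sandE_eq_some_iff (x : IS n) (t y : Fin n) :
    (x.trans (sandE n k)) t = some y ↔ x t = some y ∧ y ∈ SetA n k := by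
  simp only [PEquiv.trans_eq_some, sandE_eq_some_iff]
  constructor
  · rintro ⟨z, hz, rfl, hy⟩
    exact ⟨hz, hy⟩
  · rintro ⟨hy, hA⟩
    exact ⟨y, hy, rfl, hA⟩

theorem sandE_trans_apply_of_mem (x : IS n) {y : Fin n} (hy : y ∈ SetA n k) :
    ((sandE n k).trans x) y = x y := by
  change (sandE n k y).bind x = x y
  rw [sandE_eq_some_iff.mpr ⟨rfl, hy⟩, Option.bind_some]

theorem sandE_trans_apply_of_notMem (x : IS n) {y : Fin n} (hy : y ∉ SetA n k) :
    ((sandE n k).trans x) y = none := by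
  change (sandE n k y).bind x = none
  rw [sandE_apply_of_notMem hy, Option.bind_none]

theorem sandE_trans_sandE : (sandE n k).trans (sandE n k) = sandE n k := by
  ext1 i
  by_cases hi : i ∈ SetA n k
  · rw [sandE_trans_apply_of_mem _ hi]
  · rw [sandE_trans_apply_of_notMem _ hi, sandE_apply_of_notMem hi]

theorem smul_eq_trans_sandE_trans (x y : IS n) :
    smul n k x y = (x.trans (sandE n k)).trans ((sandE n k).trans y) := by
  rw [smul, PEquiv.trans_assoc, PEquiv.trans_assoc, ← PEquiv.trans_assoc (sandE n k),
    sandE_trans_sandE]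

theorem mem_M1_union_M3_of_apply_eq_some {x : IS n} {t y : Fin n} (hy : y ∈ SetA n k)
    (h : x t = some y) : t ∈ M1 n k x ∪ M3 n k x := by
  by_cases ht : t ∈ SetA n k
  · exact Or.inl ⟨ht, y, hy, h⟩
  · exact Or.inr ⟨ht, y, hy, h⟩

theorem mem_M1_union_M2_iff {x : IS n} {y : Fin n} (hy : y ∈ SetA n k) :
    y ∈ M1 n k x ∪ M2 n k x ↔ (x y).isSome := by
  rw [Option.isSome_iff_exists]
  constructor
  · rintro (⟨-, z, -, hz⟩ | ⟨-, z, -, hz⟩) <;> exact ⟨z, hz⟩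
  · rintro ⟨z, hz⟩
    by_cases hzA : z ∈ SetA n k
    · exact Or.inl ⟨hy, z, hzA, hz⟩
    · exact Or.inr ⟨hy, z, hzA, hz⟩

end Sandwich

namespace SimRel

variable {n k : ℕ} {a b : IS n}

theorem symm (h : SimRel n k a b) : SimRel n k b a := by
  rcases h with ⟨ha, hb, h1, h2, h3, hval⟩ | ⟨hdec, rfl⟩
  · refine Or.inl ⟨hb, ha, h1.symm, h2.symm, h3.symm, fun x hx => ?_⟩
    rw [← h1, ← h2, ← h3] at hx
    exact (hval x hx).symm
  · exact Or.inr ⟨hdec.symm, rfl⟩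

theorem M1_union_M2_eq (h : SimRel n k a b) : M1 n k a ∪ M2 n k a = M1 n k b ∪ M2 n k b := by
  rcases h with ⟨-, -, h1, h2, -⟩ | ⟨-, rfl⟩
  · rw [h1, h2]
  · rfl

theorem apply_eq (h : SimRel n k a b) {x : Fin n}
    (hx : x ∈ M1 n k a ∪ M2 n k a ∪ M3 n k a) : a x = b x := by
  rcases h with ⟨-, -, -, -, -, hval⟩ | ⟨-, rfl⟩
  · exact hval x hx
  · rfl

theorem apply_eq_some_of_mem_setA (h : SimRel n k a b) {t y : Fin n} (hy : y ∈ SetA n k)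
    (hat : a t = some y) : b t = some y := by
  rw [← h.apply_eq, hat]
  rcases mem_M1_union_M3_of_apply_eq_some hy hat with h1 | h3
  · exact Or.inl (Or.inl h1)
  · exact Or.inr h3

theorem apply_eq_of_mem_setA (h : SimRel n k a b) {y : Fin n} (hy : y ∈ SetA n k) :
    a y = b y := by
  by_cases hM : y ∈ M1 n k a ∪ M2 n k a
  · exact h.apply_eq (Or.inl hM)
  · have hM' : y ∉ M1 n k b ∪ M2 n k b := h.M1_union_M2_eq ▸ hM
    rw [mem_M1_union_M2_iff hy, Option.not_isSome_iff_eq_none] at hM hM'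
    rw [hM, hM']

theorem trans_sandE_eq (h : SimRel n k a b) : a.trans (sandE n k) = b.trans (sandE n k) := by
  ext t y
  rw [trans_sandE_eq_some_iff, trans_sandE_eq_some_iff]
  exact ⟨fun ⟨hy, hA⟩ => ⟨h.apply_eq_some_of_mem_setA hA hy, hA⟩,
    fun ⟨hy, hA⟩ => ⟨h.symm.apply_eq_some_of_mem_setA hA hy, hA⟩⟩

theorem sandE_trans_eq (h : SimRel n k a b) : (sandE n k).trans a = (sandE n k).trans b := by
  ext1 y
  by_cases hy : y ∈ SetA n k
  · rw [sandE_trans_apply_of_mem _ hy, sandE_trans_apply_of_mem _ hy, h.apply_eq_of_mem_setA hy]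
  · rw [sandE_trans_apply_of_notMem _ hy, sandE_trans_apply_of_notMem _ hy]

end SimRel

theorem simRel_mul_eq_general (n k : ℕ)
    (a a₁ b b₁ : IS n) (ha : SimRel n k a a₁) (hb : SimRel n k b b₁) :
    smul n k a b = smul n k a₁ b₁ := by
  rw [smul_eq_trans_sandE_trans, smul_eq_trans_sandE_trans, ha.trans_sandE_eq, hb.sandE_trans_eq]

/-- `a ∼ a₁` and `b ∼ b₁` imply `a * b = a₁ * b₁`. -/
theorem simRel_mul_eq (n k : ℕ) (hk : 1 ≤ k) (hkn : k ≤ n)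
    (a a₁ b b₁ : IS n) (ha : SimRel n k a a₁) (hb : SimRel n k b b₁) :
    smul n k a b = smul n k a₁ b₁ :=
  simRel_mul_eq_general n k a a₁ b b₁ ha hb
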